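/- A 3-matroid (W,H) is equatable if and only if it is exchangeable. -/

import Mathlib

open Finset

variable {V : Type*}

/-- A `k`-hypergraph `H` is separable if some vertex labeling `x : V → ℝ` has
`H` equal to the set of `k`-subsets with nonnegative label sum. -/
def SeparableHypergraph [Fintype V] [DecidableEq V] (k : ℕ) (H : Finset (Finset V)) : Prop :=
  ∃ x : V → ℝ, ∀ E : Finset V, E ∈ H ↔ E.card = k ∧ 0 ≤ ∑ v ∈ E, x v

/-- A `k`-hypergraph `H` is equatable if some nonzero nonnegative labeling `y` of the
`k`-subsets of `V` has, for every vertex `v`, the sum of labels of edges containing `v`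
equal to the sum of labels of non-edges containing `v`. -/
def EquatableHypergraph [Fintype V] [DecidableEq V] (k : ℕ) (H : Finset (Finset V)) : Prop :=
  ∃ y : Finset V → ℝ,
    (∀ G, 0 ≤ y G) ∧
    (∃ G ∈ (univ : Finset V).powersetCard k, y G ≠ 0) ∧
    ∀ v : V,
      ∑ E ∈ ((univ : Finset V).powersetCard k).filter (fun E => v ∈ E ∧ E ∈ H), y E =
      ∑ F ∈ ((univ : Finset V).powersetCard k).filter (fun F => v ∈ F ∧ F ∉ H), y F

/-- A hypergraph is exchangeable if there are edges `E₁, E₂` and `v₁ ∈ E₁ \ E₂`,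
`v₂ ∈ E₂ \ E₁` such that both sets obtained by exchanging `v₁` and `v₂` are non-edges. -/
def ExchangeableHypergraph [DecidableEq V] (H : Finset (Finset V)) : Prop :=
  ∃ E₁ ∈ H, ∃ E₂ ∈ H, ∃ v₁ ∈ E₁ \ E₂, ∃ v₂ ∈ E₂ \ E₁,
    insert v₂ (E₁.erase v₁) ∉ H ∧ insert v₁ (E₂.erase v₂) ∉ H

/-! If `H` is not exchangeable, then of the two exchanges between any two edges at least one is
an edge, so "`w` can replace `v` in every edge" is a total preorder on the vertices and `H` is
shifted with respect to a ranking `f` of the vertices. Basis exchange makes an edge of least total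
rank a minimum of `H` in the Gale order, and shiftedness makes every `3`-set above it an edge. Such
a principal Gale filter of `3`-sets is cut out by a linear threshold, so `H` is separable, and a
separable hypergraph is not equatable: summing the balance conditions against the separating
weights gives `∑_{E ∈ H} x(E) y(E) = ∑_{F ∉ H} x(F) y(F)`, where the left side is nonnegative and
every term on the right is nonpositive and vanishes only where `y` does.
Conversely, the two edges of an exchangeable pair and their two exchanges cover every vertex
equally often, so their indicator is a balanced labeling. -/

section Shift

variable [DecidableEq V] {H : Finset (Finset V)}

def ShiftLE (H : Finset (Finset V)) (v w : V) : Prop :=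
  ∀ E ∈ H, v ∈ E → w ∉ E → insert w (E.erase v) ∈ H

theorem shiftLE_refl (v : V) : ShiftLE H v v :=
  fun _ _ hv hv' => absurd hv hv'

theorem ShiftLE.trans {u v w : V} (huv : ShiftLE H u v) (hvw : ShiftLE H v w) :
    ShiftLE H u w := by
  intro E hE huE hwE
  obtain rfl | hwv := eq_or_ne w v
  · exact huv E hE huE hwE
  obtain rfl | huv' := eq_or_ne u v
  · exact hvw E hE huE hwE
  by_cases hvE : v ∈ E
  · have h := huv _ (hvw E hE hvE hwE) (by simp [huv', huE]) (by simp [hwv.symm])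
    convert h using 1
    ext a
    simp only [mem_insert, mem_erase]
    grind
  · have h := hvw _ (huv E hE huE hvE) (mem_insert_self _ _) (by simp [hwv, hwE])
    rwa [erase_insert (fun h => hvE (mem_of_mem_erase h))] at h

theorem shiftLE_total (hH : ¬ ExchangeableHypergraph H) (v w : V) :
    ShiftLE H v w ∨ ShiftLE H w v := by
  by_contra! ⟨hvw, hwv⟩
  simp only [ShiftLE, not_forall, exists_prop] at hvw hwv
  obtain ⟨E, hE, hvE, hwE, hEx⟩ := hvw
  obtain ⟨F, hF, hwF, hvF, hFx⟩ := hwv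
  exact hH ⟨E, hE, F, hF, v, mem_sdiff.2 ⟨hvE, hvF⟩, w, mem_sdiff.2 ⟨hwF, hwE⟩, hEx, hFx⟩

noncomputable def shiftRank (H : Finset (Finset V)) (v : V) : ℕ :=
  {u | ¬ ShiftLE H v u}.ncard

variable [Finite V]

theorem shiftLE_of_shiftRank_le (hH : ¬ ExchangeableHypergraph H) {v w : V}
    (h : shiftRank H v ≤ shiftRank H w) : ShiftLE H v w := by
  by_contra hvw
  have hwv := (shiftLE_total hH v w).resolve_left hvw
  have hlt : {u | ¬ ShiftLE H w u} ⊂ {u | ¬ ShiftLE H v u} :=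
    ⟨fun u hwu hvu => hwu (hwv.trans hvu), fun hsub => hsub hvw (shiftLE_refl w)⟩
  exact (Set.ncard_lt_ncard hlt (Set.toFinite _)).not_ge h

end Shift

section Gale

variable (f : V → ℕ)

/-- The Gale order through threshold counts: on sets of equal size it compares their decreasingly
sorted `f`-values componentwise. -/
def GaleLE (A B : Finset V) : Prop :=
  ∀ t, #{v ∈ A | t ≤ f v} ≤ #{v ∈ B | t ≤ f v}

/-- The `j`-th largest value of `f` on `A`, counted with multiplicity. -/
def orderStat (A : Finset V) (j : ℕ) : ℕ :=
  Nat.findGreatest (fun t => j ≤ #{v ∈ A | t ≤ f v}) (A.sup f)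

theorem antitone_card_filter_le (A : Finset V) : Antitone fun t => #{v ∈ A | t ≤ f v} :=
  fun _ _ hst => card_le_card (monotone_filter_right A fun _ _ hv => hst.trans hv)

variable {f}

theorem GaleLE.refl (A : Finset V) : GaleLE f A A := fun _ => le_rfl

theorem GaleLE.trans {A B C : Finset V} (hAB : GaleLE f A B) (hBC : GaleLE f B C) :
    GaleLE f A C := fun t => (hAB t).trans (hBC t)

theorem le_card_filter_iff_le_orderStat {A : Finset V} {j : ℕ} (hj : j ≠ 0) (hjA : j ≤ #A)
    (t : ℕ) : j ≤ #{v ∈ A | t ≤ f v} ↔ t ≤ orderStat f A j := by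
  constructor
  · intro h
    refine Nat.le_findGreatest ?_ h
    by_contra! hlt
    rw [filter_false_of_mem fun v hv => (le_sup hv).trans_lt hlt |>.not_ge] at h
    exact hj (Nat.le_zero.1 h)
  · intro h
    have hspec := Nat.findGreatest_spec (P := fun t => j ≤ #{v ∈ A | t ≤ f v}) (n := A.sup f)
      (Nat.zero_le _) (by simpa using hjA)
    exact hspec.trans (antitone_card_filter_le f A h)

theorem galeLE_iff {A B : Finset V} :
    GaleLE f A B ↔ ∀ j, j ≠ 0 → j ≤ #A → j ≤ #{v ∈ B | orderStat f A j ≤ f v} := by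
  constructor
  · intro h j hj hjA
    exact ((le_card_filter_iff_le_orderStat hj hjA _).2 le_rfl).trans (h _)
  · intro h t
    obtain hm | hm := Nat.eq_zero_or_pos #{v ∈ A | t ≤ f v}
    · simp [hm]
    have hmA : #{v ∈ A | t ≤ f v} ≤ #A := card_filter_le _ _
    exact (h _ hm.ne' hmA).trans
      (antitone_card_filter_le f B ((le_card_filter_iff_le_orderStat hm.ne' hmA t).1 le_rfl))

theorem orderStat_succ_le {A : Finset V} {j : ℕ} (hj : j ≠ 0) (hjA : j + 1 ≤ #A) :
    orderStat f A (j + 1) ≤ orderStat f A j :=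
  (le_card_filter_iff_le_orderStat hj (by omega) _).1
    (Nat.le_of_succ_le ((le_card_filter_iff_le_orderStat j.succ_ne_zero hjA _).2 le_rfl))

theorem exists_weight_galeLE_iff {A : Finset V} (hA : #A = 3) :
    ∃ x : V → ℝ, ∀ E : Finset V, #E = 3 → (GaleLE f A E ↔ 0 ≤ ∑ v ∈ E, x v) := by
  -- Writing `nⱼ` for the number of `v ∈ E` with `orderStat f A j ≤ f v`, we have
  -- `n₁ ≤ n₂ ≤ n₃ ≤ 3`, and then `4 n₁ + n₂ + 98 n₃ - 300` is nonnegative exactly when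
  -- `1 ≤ n₁`, `2 ≤ n₂` and `3 ≤ n₃`.
  refine ⟨fun v => 4 * (if orderStat f A 1 ≤ f v then 1 else 0)
    + (if orderStat f A 2 ≤ f v then 1 else 0)
    + 98 * (if orderStat f A 3 ≤ f v then 1 else 0) - 100, fun E hE => ?_⟩
  have n12 : #{v ∈ E | orderStat f A 1 ≤ f v} ≤ #{v ∈ E | orderStat f A 2 ≤ f v} :=
    antitone_card_filter_le f E (orderStat_succ_le one_ne_zero (by omega))
  have n23 : #{v ∈ E | orderStat f A 2 ≤ f v} ≤ #{v ∈ E | orderStat f A 3 ≤ f v} :=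
    antitone_card_filter_le f E (orderStat_succ_le two_ne_zero (by omega))
  have n3 : #{v ∈ E | orderStat f A 3 ≤ f v} ≤ 3 := hE ▸ card_filter_le _ _
  beta_reduce
  simp only [sum_sub_distrib, sum_add_distrib, ← mul_sum, sum_boole, sum_const, hE, nsmul_eq_mul,
    sub_nonneg, galeLE_iff, hA]
  norm_cast
  constructor
  · intro h
    have h1 := h 1 one_ne_zero (by norm_num)
    have h2 := h 2 two_ne_zero (by norm_num)
    have h3 := h 3 three_ne_zero le_rfl
    omega
  · intro h j hj hj3
    interval_cases j <;> omega

variable [DecidableEq V] {H : Finset (Finset V)} {k : ℕ}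

theorem galeLE_insert_erase {B : Finset V} {a b : V} (hb : b ∈ B) (ha : a ∉ B)
    (hab : f a ≤ f b) : GaleLE f (insert a (B.erase b)) B := by
  intro t
  rw [filter_insert, filter_erase]
  split_ifs with hta
  · rw [card_insert_of_notMem (by simp [ha]),
      card_erase_add_one (mem_filter.2 ⟨hb, hta.trans hab⟩)]
  · exact card_erase_le

theorem galeLE_of_sum_le (hH : ∀ E ∈ H, #E = k)
    (hbex : ∀ E₁ ∈ H, ∀ E₂ ∈ H, ∀ v₁ ∈ E₁ \ E₂, ∃ v₂ ∈ E₂ \ E₁, insert v₂ (E₁.erase v₁) ∈ H)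
    {A : Finset V} (hA : A ∈ H) (hmin : ∀ E ∈ H, ∑ v ∈ A, f v ≤ ∑ v ∈ E, f v)
    {B : Finset V} (hB : B ∈ H) : GaleLE f A B := by
  induction hn : #(B \ A) generalizing B with
  | zero =>
    rw [card_eq_zero, sdiff_eq_empty_iff_subset] at hn
    rw [eq_of_subset_of_card_le hn (by rw [hH A hA, hH B hB])]
    exact GaleLE.refl A
  | succ n ih =>
    obtain ⟨b, hb, hbmax⟩ := exists_max_image (B \ A) f (card_pos.1 (by omega))
    obtain ⟨a, ha, hB'⟩ := hbex B hB A hA b hb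
    rw [mem_sdiff] at ha hb
    -- Otherwise exchanging `a` out of `A` would produce an edge lighter than `A`.
    have hab : f a ≤ f b := by
      by_contra! hba
      obtain ⟨b', hb', hA'⟩ := hbex A hA B hB a (mem_sdiff.2 ha)
      have hsum := hmin _ hA'
      rw [sum_insert (fun h => (mem_sdiff.1 hb').2 (mem_of_mem_erase h)),
        ← add_sum_erase A f ha.1] at hsum
      have := hbmax b' hb'
      omega
    refine (ih hB' ?_).trans (galeLE_insert_erase hb.1 ha.2 hab)
    rw [insert_sdiff_of_mem _ ha.1, erase_sdiff_comm, card_erase_of_mem (mem_sdiff.2 hb), hn]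
    rfl

theorem mem_of_galeLE
    (hshift : ∀ E ∈ H, ∀ v ∈ E, ∀ w ∉ E, f v ≤ f w → insert w (E.erase v) ∈ H)
    {A B : Finset V} (hA : A ∈ H) (hAB : #A = #B) (hgale : GaleLE f A B) : B ∈ H := by
  induction hn : #(A \ B) generalizing A with
  | zero =>
    rw [card_eq_zero, sdiff_eq_empty_iff_subset] at hn
    rwa [← eq_of_subset_of_card_le hn hAB.ge]
  | succ n ih =>
    obtain ⟨a, ha, hamax⟩ := exists_max_image (A \ B) f (card_pos.1 (by omega))
    rw [mem_sdiff] at ha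
    obtain ⟨b, hb, hab⟩ : ∃ b ∈ B \ A, f a ≤ f b := by
      by_contra! hlt
      have hsub : {v ∈ B | f a ≤ f v} ⊆ {v ∈ A | f a ≤ f v}.erase a := by
        intro v hv
        rw [mem_filter] at hv
        have hvA : v ∈ A := by_contra fun hvA => (hlt v (mem_sdiff.2 ⟨hv.1, hvA⟩)).not_ge hv.2
        exact mem_erase.2 ⟨fun h => ha.2 (h ▸ hv.1), mem_filter.2 ⟨hvA, hv.2⟩⟩
      exact (hgale (f a)).not_gt
        ((card_le_card hsub).trans_lt (card_erase_lt_of_mem (mem_filter.2 ⟨ha.1, le_rfl⟩)))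
    rw [mem_sdiff] at hb
    have hcard : #(insert b (A.erase a)) = #B := by
      rw [card_insert_of_notMem (fun h => hb.2 (mem_of_mem_erase h)), card_erase_add_one ha.1, hAB]
    refine ih (hshift A hA a ha.1 b hb.2 hab) hcard (fun t => ?_) ?_
    · by_cases hta : t ≤ f a
      · rw [filter_insert, filter_erase, if_pos (hta.trans hab),
          card_insert_of_notMem (by simp [hb.2]), card_erase_add_one (mem_filter.2 ⟨ha.1, hta⟩)]
        exact hgale t
      -- `a` was the largest element of `A \ B`, so above `f a` the new set lies inside `B`.
      · refine card_le_card fun v hv => ?_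
        simp only [mem_filter, mem_insert, mem_erase] at hv ⊢
        obtain ⟨rfl | ⟨hva, hvA⟩, htv⟩ := hv
        · exact ⟨hb.1, htv⟩
        · refine ⟨by_contra fun hvB => hta ?_, htv⟩
          exact htv.trans (hamax v (mem_sdiff.2 ⟨hvA, hvB⟩))
    · rw [insert_sdiff_of_mem _ hb.1, erase_sdiff_comm, card_erase_of_mem (mem_sdiff.2 ha), hn]
      rfl

theorem exists_forall_mem_iff_galeLE (hH : ∀ E ∈ H, #E = k) (hne : H.Nonempty)
    (hbex : ∀ E₁ ∈ H, ∀ E₂ ∈ H, ∀ v₁ ∈ E₁ \ E₂, ∃ v₂ ∈ E₂ \ E₁, insert v₂ (E₁.erase v₁) ∈ H)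
    (hshift : ∀ E ∈ H, ∀ v ∈ E, ∀ w ∉ E, f v ≤ f w → insert w (E.erase v) ∈ H) :
    ∃ A, #A = k ∧ ∀ E, E ∈ H ↔ #E = k ∧ GaleLE f A E := by
  obtain ⟨A, hA, hmin⟩ := exists_min_image H (fun E => ∑ v ∈ E, f v) hne
  refine ⟨A, hH A hA, fun E => ⟨fun hE => ⟨hH E hE, galeLE_of_sum_le hH hbex hA hmin hE⟩, ?_⟩⟩
  rintro ⟨hE, hAE⟩
  exact mem_of_galeLE hshift hA (by rw [hH A hA, hE]) hAE

end Gale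

theorem separable_of_not_exchangeable [Fintype V] [DecidableEq V] {H : Finset (Finset V)}
    (hH : ∀ E ∈ H, #E = 3) (hne : H.Nonempty)
    (hbex : ∀ E₁ ∈ H, ∀ E₂ ∈ H, ∀ v₁ ∈ E₁ \ E₂, ∃ v₂ ∈ E₂ \ E₁, insert v₂ (E₁.erase v₁) ∈ H)
    (hex : ¬ ExchangeableHypergraph H) : SeparableHypergraph 3 H := by
  obtain ⟨A, hA, hgale⟩ := exists_forall_mem_iff_galeLE hH hne hbex
    fun E hE v hv w hw hvw => shiftLE_of_shiftRank_le hex hvw E hE hv hw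
  obtain ⟨x, hx⟩ := exists_weight_galeLE_iff (f := shiftRank H) hA
  exact ⟨x, fun E => (hgale E).trans (and_congr_right (hx E))⟩

section Equatable

variable [DecidableEq V]

theorem val_add_val_exchange {E₁ E₂ : Finset V} {v₁ v₂ : V} (hv₁ : v₁ ∈ E₁ \ E₂)
    (hv₂ : v₂ ∈ E₂ \ E₁) :
    (insert v₂ (E₁.erase v₁)).val + (insert v₁ (E₂.erase v₂)).val = E₁.val + E₂.val := by
  rw [mem_sdiff] at hv₁ hv₂
  rw [insert_val_of_notMem (fun h => hv₂.2 (mem_of_mem_erase h)),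
    insert_val_of_notMem (fun h => hv₁.2 (mem_of_mem_erase h)), erase_val, erase_val,
    Multiset.cons_add, Multiset.add_cons, ← Multiset.cons_add, ← Multiset.add_cons,
    Multiset.cons_erase hv₁.1, Multiset.cons_erase hv₂.1]

variable [Fintype V]

theorem sum_mul_sum_filter_mem (x : V → ℝ) (y : Finset V → ℝ) (T : Finset (Finset V))
    (p : Finset V → Prop) [DecidablePred p] :
    ∑ v, x v * ∑ E ∈ T with v ∈ E ∧ p E, y E = ∑ E ∈ T with p E, (∑ v ∈ E, x v) * y E := by
  simp only [mul_sum, sum_mul]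
  exact sum_comm' fun v E => by simp only [mem_univ, mem_filter]; tauto

theorem not_equatable_of_separable {k : ℕ} (hk : k ≠ 0) {H : Finset (Finset V)}
    (hsep : SeparableHypergraph k H) : ¬ EquatableHypergraph k H := by
  rintro ⟨y, hy, ⟨G, hG, hyG⟩, hbal⟩
  obtain ⟨x, hx⟩ := hsep
  set P := (univ : Finset V).powersetCard k
  have hneg : ∀ F ∈ {F ∈ P | F ∉ H}, ∑ v ∈ F, x v < 0 := fun F hF => by
    rw [mem_filter, mem_powersetCard_univ] at hF
    exact not_le.1 fun h => hF.2 ((hx F).2 ⟨hF.1, h⟩)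
  have hnonpos : ∀ F ∈ {F ∈ P | F ∉ H}, (∑ v ∈ F, x v) * y F ≤ 0 := fun F hF =>
    mul_nonpos_of_nonpos_of_nonneg (hneg F hF).le (hy F)
  have hweighted : ∑ E ∈ P with E ∈ H, (∑ v ∈ E, x v) * y E
      = ∑ F ∈ P with F ∉ H, (∑ v ∈ F, x v) * y F := by
    rw [← sum_mul_sum_filter_mem, ← sum_mul_sum_filter_mem]
    simp only [hbal]
  have hzero : ∑ F ∈ P with F ∉ H, (∑ v ∈ F, x v) * y F = 0 := by
    refine le_antisymm (sum_nonpos hnonpos) (hweighted ▸ sum_nonneg fun E hE => ?_)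
    exact mul_nonneg ((hx E).1 (mem_filter.1 hE).2).2 (hy E)
  have hy_nonedge : ∀ F ∈ {F ∈ P | F ∉ H}, y F = 0 := fun F hF =>
    (mul_eq_zero.1 ((sum_eq_zero_iff_of_nonpos hnonpos).1 hzero F hF)).resolve_left (hneg F hF).ne
  have hGH : G ∈ H := by_contra fun hGH => hyG (hy_nonedge G (mem_filter.2 ⟨hG, hGH⟩))
  obtain ⟨v, hv⟩ : G.Nonempty := card_pos.1 (by rw [(mem_powersetCard_univ.1 hG)]; omega)
  have hle : y G ≤ ∑ E ∈ P with v ∈ E ∧ E ∈ H, y E :=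
    single_le_sum (fun E _ => hy E) (mem_filter.2 ⟨hG, hv, hGH⟩)
  have hnonedges : ∑ F ∈ P with v ∈ F ∧ F ∉ H, y F = 0 := sum_eq_zero fun F hF => by
    rw [mem_filter] at hF
    exact hy_nonedge F (mem_filter.2 ⟨hF.1, hF.2.2⟩)
  exact hyG (le_antisymm (hle.trans_eq ((hbal v).trans hnonedges)) (hy G))

theorem equatable_of_exchangeable {k : ℕ} {H : Finset (Finset V)} (hH : ∀ E ∈ H, #E = k)
    (hex : ExchangeableHypergraph H) : EquatableHypergraph k H := by
  obtain ⟨E₁, hE₁, E₂, hE₂, v₁, hv₁, v₂, hv₂, hF₁, hF₂⟩ := hex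
  have hval := val_add_val_exchange hv₁ hv₂
  set F₁ := insert v₂ (E₁.erase v₁)
  set F₂ := insert v₁ (E₂.erase v₂)
  rw [mem_sdiff] at hv₁ hv₂
  have hF₁k : #F₁ = k := by
    rw [card_insert_of_notMem fun h => hv₂.2 (mem_of_mem_erase h), card_erase_add_one hv₁.1,
      hH E₁ hE₁]
  have hF₂k : #F₂ = k := by
    rw [card_insert_of_notMem fun h => hv₁.2 (mem_of_mem_erase h), card_erase_add_one hv₂.1,
      hH E₂ hE₂]
  have hcount : ∀ v, (if v ∈ F₁ then 1 else 0) + (if v ∈ F₂ then 1 else 0)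
      = (if v ∈ E₁ then 1 else 0) + (if v ∈ E₂ then 1 else 0) := fun v => by
    simpa only [Multiset.count_add, Multiset.count_eq_of_nodup (nodup _), mem_val]
      using congrArg (Multiset.count v) hval
  let y : Finset V → ℝ := fun G => (if G = E₁ then 1 else 0) + (if G = E₂ then 1 else 0)
    + (if G = F₁ then 1 else 0) + (if G = F₂ then 1 else 0)
  have hy : ∀ S, ∑ G ∈ S, y G = (if E₁ ∈ S then 1 else 0) + (if E₂ ∈ S then 1 else 0)
      + (if F₁ ∈ S then 1 else 0) + (if F₂ ∈ S then 1 else 0) := fun S => by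
    simp only [y, sum_add_distrib, sum_ite_eq']
  refine ⟨y, fun G => by positivity, ⟨E₁, mem_powersetCard_univ.2 (hH E₁ hE₁), ?_⟩, fun v => ?_⟩
  · refine ne_of_gt ?_
    simp only [y, if_pos]
    positivity
  · rw [hy, hy]
    simp only [mem_filter, mem_powersetCard, subset_univ, hE₁, hE₂, hF₁, hF₂, hH, hF₁k, hF₂k,
      and_self, and_true, true_and, and_false, ↓reduceIte, add_zero, zero_add, not_true_eq_false,
      not_false_eq_true]
    exact_mod_cast (hcount v).symm

end Equatable

theorem three_matroid_equatable_iff_exchangeable_general [Fintype V] [DecidableEq V]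
    (H : Finset (Finset V))
    (hH : ∀ E ∈ H, E.card = 3) (hne : H.Nonempty)
    (hbex : ∀ E₁ ∈ H, ∀ E₂ ∈ H, ∀ v₁ ∈ E₁ \ E₂,
      ∃ v₂ ∈ E₂ \ E₁, insert v₂ (E₁.erase v₁) ∈ H) :
    EquatableHypergraph 3 H ↔ ExchangeableHypergraph H := by
  refine ⟨fun hequ => ?_, equatable_of_exchangeable hH⟩
  by_contra hex
  exact not_equatable_of_separable three_ne_zero (separable_of_not_exchangeable hH hne hbex hex)
    hequ

/-- A 3-matroid is equatable iff it is exchangeable. -/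
theorem three_matroid_equatable_iff_exchangeable [Fintype V] [DecidableEq V]
    (H : Finset (Finset V))
    (hn : 3 ≤ Fintype.card V)
    (hH : ∀ E ∈ H, E.card = 3) (hne : H.Nonempty)
    (hbex : ∀ E₁ ∈ H, ∀ E₂ ∈ H, ∀ v₁ ∈ E₁ \ E₂,
      ∃ v₂ ∈ E₂ \ E₁, insert v₂ (E₁.erase v₁) ∈ H) :
    EquatableHypergraph 3 H ↔ ExchangeableHypergraph H :=
  three_matroid_equatable_iff_exchangeable_general H hH hne hbex
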